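/- Let G be a locally finite tree and consider a transient rotor walk started at a with (possibly empty) sink Z and final rotor configuration ξ. Let ⟨x_0 = a, x_1, x_2, …⟩ be the maximal forward path from a in ξ. If x_i is incomplete in ξ (some neighbor of x_i in G is not in the ξ-tree containing x_i), then the first visit to x_{i+1} occurred exactly one step after the last visit to x_i: FV(x_{i+1}) = LV(x_i) + 1. -/

import Mathlib

open MeasureTheory Filter ENNReal Set

namespace RotorWalk

variable {V : Type*} [DecidableEq V]

/-- One step of the rotor walk with local mechanisms `τ`:
the rotor at the current position is advanced and the walker follows it. -/
def step (τ : V → V → V) (p : V × (V → V)) : V × (V → V) :=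
  (τ p.1 (p.2 p.1), Function.update p.2 p.1 (τ p.1 (p.2 p.1)))

/-- Trajectory (position, rotor configuration) of the rotor walk started at `a`
with initial rotor configuration `ρ`. -/
def traj (τ : V → V → V) (a : V) (ρ : V → V) : ℕ → V × (V → V)
  | 0 => (a, ρ)
  | t + 1 => step τ (traj τ a ρ t)

/-- Position of the walker at time `t`. -/
def pos (τ : V → V → V) (a : V) (ρ : V → V) (t : ℕ) : V := (traj τ a ρ t).1

/-- Rotor configuration at time `t`. -/
def conf (τ : V → V → V) (a : V) (ρ : V → V) (t : ℕ) : V → V := (traj τ a ρ t).2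

/-- The walk has not hit the sink `Z` up to and including time `t`. -/
def aliveAt (τ : V → V → V) (Z : Set V) (a : V) (ρ : V → V) (t : ℕ) : Prop :=
  ∀ s ≤ t, pos τ a ρ s ∉ Z

/-- Odometer: the number of visits to `x` strictly before hitting the sink `Z`. -/
noncomputable def odometer (τ : V → V → V) (Z : Set V) (a : V) (ρ : V → V) (x : V) : ℕ∞ :=
  {t : ℕ | aliveAt τ Z a ρ t ∧ pos τ a ρ t = x}.encard

/-- Number of traversals of the directed edge `(y, x)` strictly before hitting `Z`. -/
noncomputable def edgeCount (τ : V → V → V) (Z : Set V) (a : V) (ρ : V → V) (y x : V) : ℕ∞ :=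
  {t : ℕ | aliveAt τ Z a ρ t ∧ pos τ a ρ t = y ∧ pos τ a ρ (t + 1) = x}.encard

open Classical in
/-- The final rotor configuration: the configuration at the hitting time of `Z` if the walk
hits `Z`, and otherwise the pointwise eventual value of the rotor configuration
(which exists when the walk is transient). -/
noncomputable def finalConf (τ : V → V → V) (Z : Set V) (a : V) (ρ : V → V) : V → V :=
  if ∃ t, pos τ a ρ t ∈ Z then conf τ a ρ (sInf {t | pos τ a ρ t ∈ Z})
  else fun x => if h : ∃ v, ∀ᶠ t in atTop, conf τ a ρ t x = v then h.choose else ρ x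

/-- Total number of visits to `x` by `n` sequential rotor walks (rotors not reset). -/
noncomputable def Svis (τ : V → V → V) (Z : Set V) (a : V) (ρ : V → V) (n : ℕ) (x : V) : ℕ∞ :=
  ∑ i ∈ Finset.range n, odometer τ Z a ((finalConf τ Z a)^[i] ρ) x

/-- Total number of traversals of the directed edge `(y,x)` by `n` sequential rotor walks. -/
noncomputable def Sedge (τ : V → V → V) (Z : Set V) (a : V) (ρ : V → V) (n : ℕ) (y x : V) : ℕ∞ :=
  ∑ i ∈ Finset.range n, edgeCount τ Z a ((finalConf τ Z a)^[i] ρ) y x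

/-- The rotor walk is transient: every vertex is visited finitely often (before hitting `Z`). -/
def IsTransientWalk (τ : V → V → V) (Z : Set V) (a : V) (ρ : V → V) : Prop :=
  ∀ x : V, {t : ℕ | aliveAt τ Z a ρ t ∧ pos τ a ρ t = x}.Finite

open Classical in
/-- Total number of visits to `x` by `n` sequential rotor walks with empty sink,
set to `⊤` if one of the `n` walks fails to be transient. -/
noncomputable def SvisT (τ : V → V → V) (a : V) (ρ : V → V) (n : ℕ) (x : V) : ℕ∞ :=
  if ∀ i < n, IsTransientWalk τ ∅ a ((finalConf τ ∅ a)^[i] ρ) then Svis τ ∅ a ρ n x else ⊤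

/-- The local mechanisms map neighbors to neighbors and have a single orbit on each
neighborhood (off the sink). -/
def ValidMechanism (G : SimpleGraph V) (Z : Set V) (τ : V → V → V) : Prop :=
  ∀ x ∉ Z, (∀ y, G.Adj x y → G.Adj x (τ x y)) ∧
    ∀ y, G.Adj x y → ∀ z, G.Adj x z → ∃ i : ℕ, (τ x)^[i] y = z

/-- A rotor configuration: every rotor (off the sink) points to a neighbor. -/
def ValidConfig (G : SimpleGraph V) (Z : Set V) (ρ : V → V) : Prop :=
  ∀ x ∉ Z, G.Adj x (ρ x)

/-- Time-`t` distribution of the simple random walk started at `a` and killed on `Z`. -/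
noncomputable def srw (G : SimpleGraph V) [G.LocallyFinite] (Z : Set V) (a : V) :
    ℕ → V → ℝ≥0∞
  | 0 => Set.indicator {a} 1
  | t + 1 => fun x =>
      ∑' y : V, Set.indicator {y | G.Adj y x ∧ y ∉ Z}
        (fun y => srw G Z a t y / (G.degree y : ℝ≥0∞)) y

/-- Green function: the expected number of visits to a vertex, strictly before hitting `Z`,
of the simple random walk started at `a`. -/
noncomputable def green (G : SimpleGraph V) [G.LocallyFinite] (Z : Set V) (a : V) : V → ℝ≥0∞ :=
  Set.indicator Zᶜ (fun x => ∑' t : ℕ, srw G Z a t x)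

/-- The graph is transient: the Green function (with empty sink) is finite. -/
def TransientGraph (G : SimpleGraph V) [G.LocallyFinite] : Prop :=
  ∀ a x : V, green G ∅ a x < ⊤

/-- A `Z`-oriented spanning forest, encoded as a rotor configuration: off `Z` it points to a
neighbor, on `Z` it is normalized to the identity, and every vertex eventually reaches `Z`. -/
def IsOSF (G : SimpleGraph V) (Z : Set V) (ρ : V → V) : Prop :=
  (∀ x ∉ Z, G.Adj x (ρ x)) ∧ (∀ x ∈ Z, ρ x = x) ∧ ∀ x : V, ∃ n : ℕ, ρ^[n] x ∈ Z

/-- An oriented spanning forest of an infinite graph: every vertex has out-degree one along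
an edge and there is no directed cycle. -/
def IsOSFInf (G : SimpleGraph V) (ρ : V → V) : Prop :=
  (∀ x, G.Adj x (ρ x)) ∧ ∀ x : V, ∀ n > 0, ρ^[n] x ≠ x

/-- A spanning forest of the ball of radius `R` around `a`, oriented toward the boundary
sphere (the sink), normalized to the identity outside the open ball. -/
def IsOSFBall (G : SimpleGraph V) (a : V) (R : ℕ) (ρ : V → V) : Prop :=
  (∀ x, G.dist a x < R → G.Adj x (ρ x)) ∧
  (∀ x, ¬ G.dist a x < R → ρ x = x) ∧
  ∀ x, G.dist a x < R → ∃ n : ℕ, G.dist a (ρ^[n] x) = R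

instance : MeasurableSpace (V → V) := ⊤

/-- `μ` is the oriented wired uniform spanning forest measure of `G` (with respect to the
exhaustion by balls around `a`): it is a probability measure supported on oriented spanning
forests whose finite-dimensional marginals are the limits of the uniform measures on
boundary-oriented spanning forests of the balls. -/
def IsOWUSF (G : SimpleGraph V) (a : V) (μ : Measure (V → V)) : Prop :=
  IsProbabilityMeasure μ ∧
  (∀ᵐ ρ ∂μ, IsOSFInf G ρ) ∧
  ∀ B : Finset (V × V),
    Tendsto (fun R : ℕ =>
        (({ρ : V → V | IsOSFBall G a R ρ ∧ ∀ e ∈ B, ρ e.1 = e.2}.ncard : ℝ) /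
          ({ρ : V → V | IsOSFBall G a R ρ}.ncard : ℝ))) atTop
      (nhds ((μ {ρ : V → V | ∀ e ∈ B, ρ e.1 = e.2}).toReal))

/-- Vertex-transitivity. -/
def VertexTransitive (G : SimpleGraph V) : Prop :=
  ∀ u v : V, ∃ φ : G ≃g G, φ u = v

/-- `μ` is stationary for the rotor walk (empty sink) started at `a`: almost every walk is
transient and the final rotor configuration again has law `μ`. -/
def RWStationary (τ : V → V → V) (a : V) (μ : Measure (V → V)) : Prop :=
  (∀ᵐ ρ ∂μ, IsTransientWalk τ ∅ a ρ) ∧ μ.map (finalConf τ ∅ a) = μ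

/-- `u` and `v` lie in the same (weak) component of the oriented subgraph given by `ξ`. -/
def sameTree (ξ : V → V) (u v : V) : Prop :=
  Relation.ReflTransGen (fun p q => ξ p = q ∨ ξ q = p) u v

/-- `x` is incomplete in `ξ`: some `G`-neighbor of `x` is not in the `ξ`-component of `x`. -/
def Incomplete (G : SimpleGraph V) (ξ : V → V) (x : V) : Prop :=
  ∃ y, G.Adj x y ∧ ¬ sameTree ξ x y

/-- First visit time of `x` by the rotor walk terminated upon hitting `Z`. -/
noncomputable def firstVisit (τ : V → V → V) (Z : Set V) (a : V) (ρ : V → V) (x : V) : ℕ :=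
  sInf {t | (∀ s < t, pos τ a ρ s ∉ Z) ∧ pos τ a ρ t = x}

/-- Last visit time of `x` by the rotor walk terminated upon hitting `Z`. -/
noncomputable def lastVisit (τ : V → V → V) (Z : Set V) (a : V) (ρ : V → V) (x : V) : ℕ :=
  sSup {t | (∀ s < t, pos τ a ρ s ∉ Z) ∧ pos τ a ρ t = x}

/-!
Write `x = ξ^[i] a` and `w = ξ x`. The last exit from `x` goes to `w`, so `w` is visited at time
`LV(x) + 1`; the point is that it is not visited earlier. Cut the tree at the edge `xw`. The
forward path from `a` cannot enter the side of `x` from the side of `w`: that would give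
`ξ w = x`, while the last visit to `w` comes after the last visit to `x`. So `a` lies on the side
of `x`, and an earlier visit to `w` means that the walker went from `x` to `w` before `LV(x)`.
Between two exits of `x` toward `w` the rotor at `x` makes a full turn, so the walker was sent
from `x` to every neighbor `y`. For `y ≠ w` the walker leaves `y` for good before it leaves `x`
for good, and then (as `xy` is a bridge) `ξ y = x`. Hence every neighbor of `x` lies in the
`ξ`-component of `x`, contradicting incompleteness.
-/

end RotorWalk

theorem Nat.exists_le_lt_and_not_succ {P : ℕ → Prop} {m n : ℕ} (hmn : m ≤ n) (hm : P m)
    (hn : ¬ P n) : ∃ k, m ≤ k ∧ k < n ∧ P k ∧ ¬ P (k + 1) := by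
  induction n, hmn using Nat.le_induction with
  | base => exact absurd hm hn
  | succ n hmn ih =>
    by_cases hPn : P n
    · exact ⟨n, hmn, n.lt_succ_self, hPn, hn⟩
    · obtain ⟨k, hmk, hkn, hk⟩ := ih hPn
      exact ⟨k, hmk, hkn.trans n.lt_succ_self, hk⟩

theorem Nat.exists_lt_and_count_eq {p : ℕ → Prop} [DecidablePred p] {n k : ℕ}
    (hk : k < Nat.count p n) : ∃ s < n, p s ∧ Nat.count p s = k := by
  have hcard : ∀ hf : (Set.ofPred p).Finite, k < hf.toFinset.card :=
    fun hf => hk.trans_le (Nat.count_le_card hf n)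
  exact ⟨Nat.nth p k, Nat.nth_lt_of_lt_count hk, Nat.nth_mem k hcard, Nat.count_nth hcard⟩

namespace SimpleGraph

variable {V : Type*} {G : SimpleGraph V} {x y u v : V} {f : ℕ → V} {m n : ℕ}

theorem reachable_deleteEdges_of_adj (hxv : G.Adj x v) (hvy : v ≠ y) :
    (G.deleteEdges {s(x, y)}).Reachable x v :=
  (deleteEdges_adj.2 ⟨hxv, by simp [hvy, hxv.ne']⟩).reachable

theorem IsAcyclic.not_reachable_deleteEdges (hG : G.IsAcyclic) (hxy : G.Adj x y) :
    ¬ (G.deleteEdges {s(x, y)}).Reachable x y :=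
  isBridge_iff.1 (isAcyclic_iff_forall_adj_isBridge.1 hG hxy)

theorem IsAcyclic.eq_of_adj_of_reachable_of_not_reachable (hG : G.IsAcyclic) (hxy : G.Adj x y)
    (huv : G.Adj u v) (hu : (G.deleteEdges {s(x, y)}).Reachable x u)
    (hv : ¬ (G.deleteEdges {s(x, y)}).Reachable x v) : u = x ∧ v = y := by
  by_cases he : s(u, v) = s(x, y)
  · rcases Sym2.eq_iff.1 he with h | ⟨rfl, rfl⟩
    · exact h
    · exact absurd hu (hG.not_reachable_deleteEdges hxy)
  · exact absurd (hu.trans (deleteEdges_adj.2 ⟨huv, he⟩).reachable) hv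

theorem IsAcyclic.exists_crossing_out (hG : G.IsAcyclic) (hxy : G.Adj x y) (hmn : m ≤ n)
    (hf : ∀ k, m ≤ k → k < n → G.Adj (f k) (f (k + 1)))
    (hm : (G.deleteEdges {s(x, y)}).Reachable x (f m))
    (hn : ¬ (G.deleteEdges {s(x, y)}).Reachable x (f n)) :
    ∃ k, m ≤ k ∧ k < n ∧ f k = x ∧ f (k + 1) = y := by
  obtain ⟨k, hmk, hkn, hk, hk'⟩ :=
    Nat.exists_le_lt_and_not_succ (P := fun k => (G.deleteEdges {s(x, y)}).Reachable x (f k))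
      hmn hm hn
  exact ⟨k, hmk, hkn, hG.eq_of_adj_of_reachable_of_not_reachable hxy (hf k hmk hkn) hk hk'⟩

theorem IsAcyclic.exists_crossing_in (hG : G.IsAcyclic) (hxy : G.Adj x y) (hmn : m ≤ n)
    (hf : ∀ k, m ≤ k → k < n → G.Adj (f k) (f (k + 1)))
    (hm : ¬ (G.deleteEdges {s(x, y)}).Reachable x (f m))
    (hn : (G.deleteEdges {s(x, y)}).Reachable x (f n)) :
    ∃ k, m ≤ k ∧ k < n ∧ f k = y ∧ f (k + 1) = x := by
  obtain ⟨k, hmk, hkn, hk, hk'⟩ :=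
    Nat.exists_le_lt_and_not_succ (P := fun k => ¬ (G.deleteEdges {s(x, y)}).Reachable x (f k))
      hmn hm (not_not_intro hn)
  obtain ⟨h₁, h₂⟩ :=
    hG.eq_of_adj_of_reachable_of_not_reachable hxy (hf k hmk hkn).symm (not_not.1 hk') hk
  exact ⟨k, hmk, hkn, h₂, h₁⟩

end SimpleGraph

namespace RotorWalk

variable {V : Type*} [DecidableEq V] {τ : V → V → V} {Z : Set V} {a : V} {ρ : V → V} {x y : V}
  {G : SimpleGraph V}

def visitTimes (τ : V → V → V) (Z : Set V) (a : V) (ρ : V → V) (x : V) : Set ℕ :=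
  {t | (∀ s < t, pos τ a ρ s ∉ Z) ∧ pos τ a ρ t = x}

def visitCount (τ : V → V → V) (a : V) (ρ : V → V) (x : V) (t : ℕ) : ℕ :=
  Nat.count (pos τ a ρ · = x) t

theorem pos_succ (t : ℕ) :
    pos τ a ρ (t + 1) = τ (pos τ a ρ t) (conf τ a ρ t (pos τ a ρ t)) := rfl

theorem conf_succ (t : ℕ) :
    conf τ a ρ (t + 1) = Function.update (conf τ a ρ t) (pos τ a ρ t) (pos τ a ρ (t + 1)) := rfl

theorem conf_succ_apply_self (t : ℕ) : conf τ a ρ (t + 1) (pos τ a ρ t) = pos τ a ρ (t + 1) :=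
  Function.update_self ..

theorem conf_apply_eq_iterate (x : V) (t : ℕ) :
    conf τ a ρ t x = (τ x)^[visitCount τ a ρ x t] (ρ x) := by
  induction t with
  | zero => rfl
  | succ t ih =>
    rw [conf_succ, visitCount, Nat.count_succ, ← visitCount]
    by_cases h : pos τ a ρ t = x
    · subst h
      rw [Function.update_self, if_pos rfl, pos_succ, ih, Function.iterate_succ_apply']
    · rw [Function.update_of_ne (Ne.symm h), if_neg h, ih, Nat.add_zero]

theorem pos_succ_eq_iterate {t : ℕ} (h : pos τ a ρ t = x) :
    pos τ a ρ (t + 1) = (τ x)^[visitCount τ a ρ x t + 1] (ρ x) := by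
  rw [pos_succ, h, conf_apply_eq_iterate, Function.iterate_succ_apply']

theorem conf_apply_eq_of_forall_ne {m n : ℕ} (hmn : m ≤ n)
    (h : ∀ s, m ≤ s → s < n → pos τ a ρ s ≠ x) : conf τ a ρ n x = conf τ a ρ m x := by
  induction n, hmn using Nat.le_induction with
  | base => rfl
  | succ n hmn ih =>
    rw [conf_succ, Function.update_of_ne (h n hmn n.lt_succ_self).symm,
      ih fun s hms hsn => h s hms (hsn.trans n.lt_succ_self)]

theorem validConfig_conf (hτ : ValidMechanism G Z τ) (hρ : ValidConfig G Z ρ) (t : ℕ) :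
    ValidConfig G Z (conf τ a ρ t) := by
  induction t with
  | zero => exact hρ
  | succ t ih =>
    intro x hx
    rw [conf_succ]
    by_cases h : x = pos τ a ρ t
    · subst h
      rw [Function.update_self]
      exact (hτ _ hx).1 _ (ih _ hx)
    · rw [Function.update_of_ne h]
      exact ih x hx

theorem adj_pos_succ (hτ : ValidMechanism G Z τ) (hρ : ValidConfig G Z ρ) {t : ℕ}
    (h : pos τ a ρ t ∉ Z) : G.Adj (pos τ a ρ t) (pos τ a ρ (t + 1)) :=
  (hτ _ h).1 _ (validConfig_conf hτ hρ t _ h)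

theorem mem_visitTimes_of_lt {v : V} {s t : ℕ} (ht : t ∈ visitTimes τ Z a ρ v) (hst : s < t)
    (hs : pos τ a ρ s = x) : s ∈ visitTimes τ Z a ρ x :=
  ⟨fun r hr => ht.1 r (hr.trans hst), hs⟩

theorem adj_pos_succ_of_lt (hτ : ValidMechanism G Z τ) (hρ : ValidConfig G Z ρ) {v : V} {s t : ℕ}
    (ht : t ∈ visitTimes τ Z a ρ v) (hst : s < t) : G.Adj (pos τ a ρ s) (pos τ a ρ (s + 1)) :=
  adj_pos_succ hτ hρ (ht.1 s hst)

/-- Between two exits of `x` toward the same neighbor the rotor at `x` runs through whole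
periods of its single orbit. -/
theorem exists_exit_of_exit_eq (hτ : ValidMechanism G Z τ) (hρ : ValidConfig G Z ρ) (hx : x ∉ Z)
    (hxy : G.Adj x y) {s₁ s₂ : ℕ} (hs₁ : pos τ a ρ s₁ = x) (hs₂ : pos τ a ρ s₂ = x)
    (hlt : s₁ < s₂) (hexit : pos τ a ρ (s₁ + 1) = pos τ a ρ (s₂ + 1)) :
    ∃ s < s₂, pos τ a ρ s = x ∧ pos τ a ρ (s + 1) = y := by
  have hc : visitCount τ a ρ x s₁ < visitCount τ a ρ x s₂ := Nat.count_strict_mono hs₁ hlt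
  set p := visitCount τ a ρ x s₂ - visitCount τ a ρ x s₁
  have hper : Function.IsPeriodicPt (τ x) p (pos τ a ρ (s₁ + 1)) := by
    change (τ x)^[p] (pos τ a ρ (s₁ + 1)) = pos τ a ρ (s₁ + 1)
    conv_rhs => rw [hexit]
    rw [pos_succ_eq_iterate hs₁, pos_succ_eq_iterate hs₂, ← Function.iterate_add_apply]
    congr 1
    omega
  have hadj : G.Adj x (pos τ a ρ (s₁ + 1)) := hs₁ ▸ adj_pos_succ hτ hρ (hs₁.symm ▸ hx)
  obtain ⟨m, hm⟩ := (hτ x hx).2 _ hadj y hxy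
  have hk : visitCount τ a ρ x s₁ + m % p < visitCount τ a ρ x s₂ := by
    have := Nat.mod_lt m (show 0 < p by omega)
    omega
  obtain ⟨s, hs, hsx, hcs⟩ := Nat.exists_lt_and_count_eq hk
  refine ⟨s, hs, hsx, ?_⟩
  rw [pos_succ_eq_iterate hsx, visitCount, hcs, ← hm, ← hper.iterate_mod_apply,
    pos_succ_eq_iterate hs₁, ← Function.iterate_add_apply]
  congr 1
  omega

section Transient

variable (hwalk : IsTransientWalk τ Z a ρ)
include hwalk

theorem visitTimes_finite (hx : x ∉ Z) : (visitTimes τ Z a ρ x).Finite := by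
  refine (hwalk x).subset fun t ht => ⟨fun s hs => ?_, ht.2⟩
  rcases hs.lt_or_eq with hs | rfl
  · exact ht.1 s hs
  · rwa [ht.2]

theorem lastVisit_mem (hx : x ∉ Z) (hvis : (visitTimes τ Z a ρ x).Nonempty) :
    lastVisit τ Z a ρ x ∈ visitTimes τ Z a ρ x :=
  Nat.sSup_mem hvis (visitTimes_finite hwalk hx).bddAbove

theorem le_lastVisit (hx : x ∉ Z) {t : ℕ} (ht : t ∈ visitTimes τ Z a ρ x) :
    t ≤ lastVisit τ Z a ρ x :=
  le_csSup (visitTimes_finite hwalk hx).bddAbove ht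

theorem conf_apply_eq_pos_lastVisit_succ (hx : x ∉ Z) (hvis : (visitTimes τ Z a ρ x).Nonempty)
    {t : ℕ} (ht : lastVisit τ Z a ρ x < t) (halive : ∀ s < t, pos τ a ρ s ∉ Z) :
    conf τ a ρ t x = pos τ a ρ (lastVisit τ Z a ρ x + 1) := by
  have hL := lastVisit_mem hwalk hx hvis
  rw [conf_apply_eq_of_forall_ne ht fun s hLs hst hs => ?_]
  · have h := conf_succ_apply_self (τ := τ) (a := a) (ρ := ρ) (lastVisit τ Z a ρ x)
    rwa [hL.2] at h
  · have := le_lastVisit hwalk hx ⟨fun r hr => halive r (hr.trans hst), hs⟩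
    omega

theorem finalConf_eq_pos_lastVisit_succ (hx : x ∉ Z) (hvis : (visitTimes τ Z a ρ x).Nonempty) :
    finalConf τ Z a ρ x = pos τ a ρ (lastVisit τ Z a ρ x + 1) := by
  have hL := lastVisit_mem hwalk hx hvis
  by_cases hhit : ∃ t, pos τ a ρ t ∈ Z
  · rw [finalConf, if_pos hhit]
    have hT : pos τ a ρ (sInf {t | pos τ a ρ t ∈ Z}) ∈ Z := Nat.sInf_mem hhit
    have hLT : lastVisit τ Z a ρ x < sInf {t | pos τ a ρ t ∈ Z} := by
      by_contra! h
      rcases h.lt_or_eq with h | h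
      · exact hL.1 _ h hT
      · exact hx (hL.2 ▸ h ▸ hT)
    exact conf_apply_eq_pos_lastVisit_succ hwalk hx hvis hLT fun s hs => Nat.notMem_of_lt_sInf hs
  · have hhit := not_exists.1 hhit
    have hev : ∀ᶠ t in atTop, conf τ a ρ t x = pos τ a ρ (lastVisit τ Z a ρ x + 1) :=
      eventually_atTop.2 ⟨_, fun t ht =>
        conf_apply_eq_pos_lastVisit_succ hwalk hx hvis ht fun s _ => hhit s⟩
    have hex : ∃ v, ∀ᶠ t in atTop, conf τ a ρ t x = v := ⟨_, hev⟩
    rw [finalConf, if_neg (not_exists.2 hhit), dif_pos hex]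
    obtain ⟨t, h₁, h₂⟩ := (hex.choose_spec.and hev).exists
    exact h₁.symm.trans h₂

theorem lastVisit_succ_mem_visitTimes_finalConf (hx : x ∉ Z)
    (hvis : (visitTimes τ Z a ρ x).Nonempty) :
    lastVisit τ Z a ρ x + 1 ∈ visitTimes τ Z a ρ (finalConf τ Z a ρ x) := by
  have hL := lastVisit_mem hwalk hx hvis
  refine ⟨fun s hs => ?_, (finalConf_eq_pos_lastVisit_succ hwalk hx hvis).symm⟩
  rcases Nat.lt_succ_iff_lt_or_eq.1 hs with hs | rfl
  · exact hL.1 s hs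
  · rwa [hL.2]

theorem visitTimes_iterate_finalConf_nonempty {j : ℕ}
    (hpath : ∀ k < j, (finalConf τ Z a ρ)^[k] a ∉ Z) :
    (visitTimes τ Z a ρ ((finalConf τ Z a ρ)^[j] a)).Nonempty := by
  induction j with
  | zero => exact ⟨0, fun s hs => absurd hs s.not_lt_zero, rfl⟩
  | succ j ih =>
    rw [Function.iterate_succ_apply']
    exact ⟨_, lastVisit_succ_mem_visitTimes_finalConf hwalk (hpath j j.lt_succ_self)
      (ih fun k hk => hpath k (hk.trans j.lt_succ_self))⟩

theorem finalConf_finalConf_ne (hx : x ∉ Z) (hvis : (visitTimes τ Z a ρ x).Nonempty)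
    (hw : finalConf τ Z a ρ x ∉ Z) : finalConf τ Z a ρ (finalConf τ Z a ρ x) ≠ x := by
  intro hcycle
  have hw_vis := lastVisit_succ_mem_visitTimes_finalConf hwalk hx hvis
  have hx_vis := lastVisit_succ_mem_visitTimes_finalConf hwalk hw ⟨_, hw_vis⟩
  rw [hcycle] at hx_vis
  have := le_lastVisit hwalk hw hw_vis
  have := le_lastVisit hwalk hx hx_vis
  omega

variable (hτ : ValidMechanism G Z τ) (hρ : ValidConfig G Z ρ)
include hτ hρ

theorem adj_finalConf (hx : x ∉ Z) (hvis : (visitTimes τ Z a ρ x).Nonempty) :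
    G.Adj x (finalConf τ Z a ρ x) := by
  have hL := lastVisit_mem hwalk hx hvis
  have h := adj_pos_succ hτ hρ (t := lastVisit τ Z a ρ x) (hL.2.symm ▸ hx)
  rwa [hL.2, ← finalConf_eq_pos_lastVisit_succ hwalk hx hvis] at h

/-- After leaving `x` for good the walker can only reach the far side of the bridge `xy`
through `x`. -/
theorem finalConf_eq_of_lastVisit_lt (hG : G.IsAcyclic) (hxy : G.Adj x y) (hx : x ∉ Z)
    (hy : y ∉ Z) (hxvis : (visitTimes τ Z a ρ x).Nonempty)
    (hyvis : (visitTimes τ Z a ρ y).Nonempty) (hlt : lastVisit τ Z a ρ x < lastVisit τ Z a ρ y) :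
    finalConf τ Z a ρ x = y := by
  by_contra hne
  have hLy := lastVisit_mem hwalk hy hyvis
  have hstart : (G.deleteEdges {s(x, y)}).Reachable x (pos τ a ρ (lastVisit τ Z a ρ x + 1)) := by
    rw [← finalConf_eq_pos_lastVisit_succ hwalk hx hxvis]
    exact SimpleGraph.reachable_deleteEdges_of_adj (adj_finalConf hwalk hτ hρ hx hxvis) hne
  have hend : ¬ (G.deleteEdges {s(x, y)}).Reachable x (pos τ a ρ (lastVisit τ Z a ρ y)) := by
    rw [hLy.2]
    exact hG.not_reachable_deleteEdges hxy
  obtain ⟨u, hLu, huLy, hux, -⟩ :=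
    hG.exists_crossing_out hxy (f := pos τ a ρ) (Nat.succ_le_of_lt hlt)
    (fun k _ hk => adj_pos_succ_of_lt hτ hρ hLy hk) hstart hend
  have := le_lastVisit hwalk hx (mem_visitTimes_of_lt hLy huLy hux)
  omega

theorem finalConf_eq_of_exit (hG : G.IsAcyclic) (hxy : G.Adj x y) (hx : x ∉ Z) {s : ℕ}
    (hs : s ∈ visitTimes τ Z a ρ x) (hsy : pos τ a ρ (s + 1) = y)
    (hne : finalConf τ Z a ρ x ≠ y) : finalConf τ Z a ρ y = x := by
  have hxvis : (visitTimes τ Z a ρ x).Nonempty := ⟨s, hs⟩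
  have hL := lastVisit_mem hwalk hx hxvis
  have hsL : s + 1 < lastVisit τ Z a ρ x := by
    have hle := le_lastVisit hwalk hx hs
    have h₁ : s ≠ lastVisit τ Z a ρ x := fun h =>
      hne (by rw [finalConf_eq_pos_lastVisit_succ hwalk hx hxvis, ← h, hsy])
    have h₂ : s + 1 ≠ lastVisit τ Z a ρ x := fun h => hxy.ne (by rw [← hsy, h, hL.2])
    omega
  have hyvis : s + 1 ∈ visitTimes τ Z a ρ y := mem_visitTimes_of_lt hL hsL hsy
  have hy : y ∉ Z := hsy ▸ hL.1 _ hsL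
  have hLne : lastVisit τ Z a ρ x ≠ lastVisit τ Z a ρ y := fun h =>
    hxy.ne (by rw [← hL.2, h, (lastVisit_mem hwalk hy ⟨_, hyvis⟩).2])
  rcases hLne.lt_or_gt with hlt | hlt
  · exact absurd (finalConf_eq_of_lastVisit_lt hwalk hτ hρ hG hxy hx hy hxvis ⟨_, hyvis⟩ hlt) hne
  · exact finalConf_eq_of_lastVisit_lt hwalk hτ hρ hG hxy.symm hy hx ⟨_, hyvis⟩ hxvis hlt

theorem reachable_deleteEdges_iterate_finalConf (hG : G.IsAcyclic) {i : ℕ}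
    (hpath : ∀ j ≤ i, (finalConf τ Z a ρ)^[j] a ∉ Z) :
    (G.deleteEdges {s((finalConf τ Z a ρ)^[i] a, finalConf τ Z a ρ ((finalConf τ Z a ρ)^[i] a))}
      ).Reachable ((finalConf τ Z a ρ)^[i] a) a := by
  set ξ := finalConf τ Z a ρ
  have hvis : ∀ j ≤ i, (visitTimes τ Z a ρ (ξ^[j] a)).Nonempty := fun j hj =>
    visitTimes_iterate_finalConf_nonempty hwalk fun k hk => hpath k (by omega)
  have hadj : ∀ j ≤ i, G.Adj (ξ^[j] a) (ξ (ξ^[j] a)) := fun j hj =>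
    adj_finalConf hwalk hτ hρ (hpath j hj) (hvis j hj)
  by_contra ha
  -- otherwise the forward path enters the side of `ξ^[i] a` through the edge, forcing a 2-cycle
  obtain ⟨j, -, hji, hjw, hjx⟩ := hG.exists_crossing_in (hadj i le_rfl) (Nat.zero_le i)
    (f := (ξ^[·] a)) (fun k _ hk => (Function.iterate_succ_apply' ξ k a).symm ▸ hadj k hk.le)
    ha (SimpleGraph.Reachable.refl _)
  rw [Function.iterate_succ_apply', hjw] at hjx
  exact finalConf_finalConf_ne hwalk (hpath i le_rfl) (hvis i le_rfl)
    (show ξ (ξ^[i] a) ∉ Z from hjw ▸ hpath j hji.le) hjx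

theorem lastVisit_lt_of_mem_visitTimes_finalConf (hG : G.IsAcyclic) (hx : x ∉ Z)
    (hvis : (visitTimes τ Z a ρ x).Nonempty)
    (ha : (G.deleteEdges {s(x, finalConf τ Z a ρ x)}).Reachable x a)
    (hinc : Incomplete G (finalConf τ Z a ρ) x) {t : ℕ}
    (ht : t ∈ visitTimes τ Z a ρ (finalConf τ Z a ρ x)) : lastVisit τ Z a ρ x < t := by
  obtain ⟨y, hxy, hy⟩ := hinc
  have hyw : finalConf τ Z a ρ x ≠ y := fun h => hy (.single (.inl h))
  have hxw := adj_finalConf hwalk hτ hρ hx hvis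
  have hL := lastVisit_mem hwalk hx hvis
  by_contra! htL
  obtain ⟨u, -, hut, hux, huw⟩ := hG.exists_crossing_out hxw (f := pos τ a ρ) (Nat.zero_le t)
    (fun k _ hk => adj_pos_succ_of_lt hτ hρ ht hk) ha
    (by rw [ht.2]; exact hG.not_reachable_deleteEdges hxw)
  obtain ⟨s, hs, hsx, hsy⟩ := exists_exit_of_exit_eq hτ hρ hx hxy hux hL.2 (by omega)
    (by rw [huw, ← finalConf_eq_pos_lastVisit_succ hwalk hx hvis])
  exact hy (.single (.inr (finalConf_eq_of_exit hwalk hτ hρ hG hxy hx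
    (mem_visitTimes_of_lt hL hs hsx) hsy hyw)))

end Transient

theorem firstVisit_eq_lastVisit_add_one_general
    {V : Type*} [DecidableEq V]
    (G : SimpleGraph V) (htree : G.IsTree)
    (Z : Set V) (τ : V → V → V) (hτ : ValidMechanism G Z τ)
    (a : V) (ρ : V → V) (hρ : ValidConfig G Z ρ)
    (hwalk : IsTransientWalk τ Z a ρ)
    (i : ℕ) (hpath : ∀ j ≤ i, (finalConf τ Z a ρ)^[j] a ∉ Z)
    (hinc : Incomplete G (finalConf τ Z a ρ) ((finalConf τ Z a ρ)^[i] a)) :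
    firstVisit τ Z a ρ ((finalConf τ Z a ρ)^[i + 1] a) =
      lastVisit τ Z a ρ ((finalConf τ Z a ρ)^[i] a) + 1 := by
  have hx := hpath i le_rfl
  have hvis := visitTimes_iterate_finalConf_nonempty hwalk fun k hk => hpath k hk.le
  have hw := lastVisit_succ_mem_visitTimes_finalConf hwalk hx hvis
  have ha := reachable_deleteEdges_iterate_finalConf hwalk hτ hρ htree.isAcyclic hpath
  rw [Function.iterate_succ_apply']
  exact le_antisymm (Nat.sInf_le hw) (le_csInf ⟨_, hw⟩ fun t ht =>
    lastVisit_lt_of_mem_visitTimes_finalConf hwalk hτ hρ htree.isAcyclic hx hvis ha hinc ht)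

/-- on a locally finite tree, for a transient rotor walk with final rotor
configuration `ξ`, if the vertex `x_i = ξ^[i] a` on the maximal forward path from `a` in `ξ`
is incomplete, then the first visit to `x_{i+1}` occurred exactly one step after the last
visit to `x_i`. -/
theorem firstVisit_eq_lastVisit_add_one
    {V : Type*} [DecidableEq V]
    (G : SimpleGraph V) [G.LocallyFinite] (htree : G.IsTree)
    (Z : Set V) (τ : V → V → V) (hτ : ValidMechanism G Z τ)
    (a : V) (ha : a ∉ Z) (ρ : V → V) (hρ : ValidConfig G Z ρ)
    (hwalk : IsTransientWalk τ Z a ρ)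
    (i : ℕ) (hpath : ∀ j ≤ i, (finalConf τ Z a ρ)^[j] a ∉ Z)
    (hinc : Incomplete G (finalConf τ Z a ρ) ((finalConf τ Z a ρ)^[i] a)) :
    firstVisit τ Z a ρ ((finalConf τ Z a ρ)^[i + 1] a) =
      lastVisit τ Z a ρ ((finalConf τ Z a ρ)^[i] a) + 1 :=
  firstVisit_eq_lastVisit_add_one_general G htree Z τ hτ a ρ hρ hwalk i hpath hinc

end RotorWalk
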